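/- Let g(z₁,z₂) = (1 − z₁)/(2 − z₁ − z₂). Then g is square-integrable on 𝕋²: ∫_{𝕋²} |1 − z₁|² / |2 − z₁ − z₂|² dσ < ∞. -/

import Mathlib

/-!
Integrate over `z₂ = e^{iy}` first. With `N = |1 - z₁|² = 2 - 2 cos x` and `w = 2 - z₁ = r e^{iφ}`
one has `r² = 1 + 2N`, so `r - 1 ≥ N / 3`, and the law of cosines gives
`|w - e^{iy}|² = (r - 1)² + r (2 - 2 cos (y - φ)) ≥ (N² + (2 (y - φ) / π)²) / 9` after reducing
`y - φ` to `[-π, π]`. Hence the inner integrand is dominated by `9N` times a Lorentzian of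
width `∼ N`, whose integral `9N · π / (2N / π) = 9π² / 2` does not depend on `x`.
-/

open MeasureTheory Real
open Complex (I arg)

/-- `|g(e^{ix}, e^{iy})|²`. -/
noncomputable def gNormSq (x y : ℝ) : ℝ :=
  ‖1 - Complex.exp (I * x)‖ ^ 2 / ‖2 - Complex.exp (I * x) - Complex.exp (I * y)‖ ^ 2

noncomputable def lorentzian (b c d y : ℝ) : ℝ := (b ^ 2 + (c * (y - d)) ^ 2)⁻¹

lemma norm_sub_exp_mul_I_sq (w : ℂ) (y : ℝ) :
    ‖w - Complex.exp (I * y)‖ ^ 2 = (‖w‖ - 1) ^ 2 + ‖w‖ * (2 - 2 * cos (y - arg w)) := by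
  conv_lhs => rw [← Complex.norm_mul_exp_arg_mul_I w]
  rw [Complex.sq_norm, Complex.normSq_apply, cos_sub, mul_comm I]
  simp only [Complex.sub_re, Complex.sub_im, Complex.mul_re, Complex.mul_im,
    Complex.ofReal_re, Complex.ofReal_im, Complex.exp_ofReal_mul_I_re,
    Complex.exp_ofReal_mul_I_im]
  linear_combination ‖w‖ ^ 2 * sin_sq_add_cos_sq (arg w) + sin_sq_add_cos_sq y

lemma norm_one_sub_exp_mul_I_sq (x : ℝ) :
    ‖1 - Complex.exp (I * x)‖ ^ 2 = 2 - 2 * cos x := by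
  simpa using norm_sub_exp_mul_I_sq 1 x

lemma norm_two_sub_exp_mul_I_sq (x : ℝ) :
    ‖2 - Complex.exp (I * x)‖ ^ 2 = 1 + 2 * (2 - 2 * cos x) := by
  rw [norm_sub_exp_mul_I_sq]; norm_num

lemma sq_div_nine_le_sub_one_sq {N r : ℝ} (hN : 0 ≤ N) (hN4 : N ≤ 4) (hr : 0 ≤ r)
    (hr2 : r ^ 2 = 1 + 2 * N) : N ^ 2 / 9 ≤ (r - 1) ^ 2 := by
  have : 1 ≤ r := by nlinarith
  nlinarith

lemma sq_two_div_pi_mul_le_two_sub_two_cos {t : ℝ} (ht : |t| ≤ π) :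
    (2 / π * t) ^ 2 ≤ 2 - 2 * cos t := by
  have := cos_le_one_sub_mul_cos_sq ht
  have hπ := pi_pos.ne'
  calc (2 / π * t) ^ 2 = 2 * (2 / π ^ 2 * t ^ 2) := by field_simp
    _ ≤ 2 - 2 * cos t := by linarith

lemma integral_lorentzian {b c : ℝ} (hb : 0 < b) (hc : 0 < c) (d : ℝ) :
    ∫ y, lorentzian b c d y = π / (b * c) := by
  have hscale : ∀ y, lorentzian b c d y = (b ^ 2)⁻¹ * (1 + (c / b * (y - d)) ^ 2)⁻¹ := by
    intro y
    rw [lorentzian, ← mul_inv]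
    field_simp
  simp_rw [hscale]
  rw [integral_const_mul, integral_sub_right_eq_self (fun y => (1 + (c / b * y) ^ 2)⁻¹) d,
    Measure.integral_comp_mul_left (fun t => (1 + t ^ 2)⁻¹), integral_univ_inv_one_add_sq,
    abs_of_pos (by positivity), smul_eq_mul]
  field_simp

lemma integrable_lorentzian {b c : ℝ} (hb : 0 < b) (hc : 0 < c) (d : ℝ) :
    Integrable (lorentzian b c d) := by
  have h := ((integrable_inv_one_add_sq.comp_mul_left' (div_pos hc hb).ne').comp_sub_right d
    ).const_mul (b ^ 2)⁻¹
  refine h.congr (ae_of_all _ fun y => ?_)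
  simp only [lorentzian, ← mul_inv]
  field_simp

lemma lintegral_lorentzian {b c : ℝ} (hb : 0 < b) (hc : 0 < c) (d : ℝ) :
    ∫⁻ y, ENNReal.ofReal (lorentzian b c d y) = ENNReal.ofReal (π / (b * c)) := by
  rw [← ofReal_integral_eq_lintegral_ofReal (integrable_lorentzian hb hc d)
    (ae_of_all _ fun y => by unfold lorentzian; positivity), integral_lorentzian hb hc d]

@[fun_prop]
lemma measurable_lorentzian (b c d : ℝ) : Measurable (lorentzian b c d) := by
  unfold lorentzian; fun_prop

lemma sq_add_two_sub_two_cos_le_nine_mul_norm_sq (x y : ℝ) :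
    (2 - 2 * cos x) ^ 2 + (2 - 2 * cos (y - arg (2 - Complex.exp (I * x)))) ≤
      9 * ‖2 - Complex.exp (I * x) - Complex.exp (I * y)‖ ^ 2 := by
  set r := ‖2 - Complex.exp (I * x)‖
  have hr2 : r ^ 2 = 1 + 2 * (2 - 2 * cos x) := norm_two_sub_exp_mul_I_sq x
  have hcosx := neg_one_le_cos x
  have hcosx' := cos_le_one x
  have hcos := cos_le_one (y - arg (2 - Complex.exp (I * x)))
  have hr1 : 1 ≤ r := by nlinarith [norm_nonneg (2 - Complex.exp (I * x))]
  have := sq_div_nine_le_sub_one_sq (by linarith) (by linarith) (by linarith) hr2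
  rw [norm_sub_exp_mul_I_sq]
  nlinarith

lemma gNormSq_le_lorentzian {x : ℝ} (hx : 0 < 2 - 2 * cos x) {y d : ℝ}
    (hd : (2 / π * (y - d)) ^ 2 ≤ 2 - 2 * cos (y - arg (2 - Complex.exp (I * x)))) :
    gNormSq x y ≤ 9 * (2 - 2 * cos x) * lorentzian (2 - 2 * cos x) (2 / π) d y := by
  have h := sq_add_two_sub_two_cos_le_nine_mul_norm_sq x y
  have hpos : 0 < (2 - 2 * cos x) ^ 2 + (2 / π * (y - d)) ^ 2 := by positivity
  have hD : 0 < ‖2 - Complex.exp (I * x) - Complex.exp (I * y)‖ ^ 2 := by nlinarith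
  rw [gNormSq, lorentzian, norm_one_sub_exp_mul_I_sq, ← div_eq_mul_inv]
  calc (2 - 2 * cos x) / ‖2 - Complex.exp (I * x) - Complex.exp (I * y)‖ ^ 2
      = 9 * (2 - 2 * cos x) / (9 * ‖2 - Complex.exp (I * x) - Complex.exp (I * y)‖ ^ 2) := by
        field_simp
    _ ≤ _ := div_le_div_of_nonneg_left (by positivity) hpos (by linarith)

lemma gNormSq_le_lorentzian_add {x : ℝ} (hx : 0 < 2 - 2 * cos x) {y : ℝ}
    (hy : y ∈ Set.Icc 0 (2 * π)) :
    gNormSq x y ≤ 9 * (2 - 2 * cos x) *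
      (lorentzian (2 - 2 * cos x) (2 / π) (arg (2 - Complex.exp (I * x))) y +
        lorentzian (2 - 2 * cos x) (2 / π) (arg (2 - Complex.exp (I * x)) + 2 * π) y) := by
  set φ := arg (2 - Complex.exp (I * x))
  have hφ := Complex.neg_pi_lt_arg (2 - Complex.exp (I * x))
  have hφ' := Complex.arg_le_pi (2 - Complex.exp (I * x))
  have hL (d : ℝ) : 0 ≤ 9 * (2 - 2 * cos x) * lorentzian (2 - 2 * cos x) (2 / π) d y := by
    unfold lorentzian; positivity
  rw [mul_add]
  -- `y - φ ∈ [-π, 3π]`: reduce it to `[-π, π]` by a shift of `0` or `2π`.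
  rcases le_or_gt (y - φ) π with hyφ | hyφ
  · have ht : |y - φ| ≤ π := abs_le.2 ⟨by linarith [hy.1], hyφ⟩
    exact le_add_of_le_of_nonneg
      (gNormSq_le_lorentzian hx (sq_two_div_pi_mul_le_two_sub_two_cos ht)) (hL _)
  · have ht : |y - (φ + 2 * π)| ≤ π := abs_le.2 ⟨by linarith, by linarith [hy.2]⟩
    have hper : cos (y - (φ + 2 * π)) = cos (y - φ) := by
      rw [← sub_sub, cos_sub_two_pi]
    refine le_add_of_nonneg_of_le (hL _) (gNormSq_le_lorentzian hx ?_)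
    exact hper ▸ sq_two_div_pi_mul_le_two_sub_two_cos ht

lemma setLIntegral_gNormSq_le (x : ℝ) :
    ∫⁻ y in Set.Icc 0 (2 * π), ENNReal.ofReal (gNormSq x y) ≤ ENNReal.ofReal (9 * π ^ 2) := by
  set N := 2 - 2 * cos x
  rcases (show 0 ≤ N by linarith [cos_le_one x]).eq_or_lt with hN | hN
  · have h0 : 2 - 2 * cos x = 0 := hN.symm
    simp [gNormSq, norm_one_sub_exp_mul_I_sq, h0]
  set φ := arg (2 - Complex.exp (I * x))
  have hc : 0 < 2 / π := by positivity
  calc ∫⁻ y in Set.Icc 0 (2 * π), ENNReal.ofReal (gNormSq x y)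
      ≤ ∫⁻ y in Set.Icc 0 (2 * π), ENNReal.ofReal (9 * N) *
          (ENNReal.ofReal (lorentzian N (2 / π) φ y) +
            ENNReal.ofReal (lorentzian N (2 / π) (φ + 2 * π) y)) := by
        refine setLIntegral_mono' measurableSet_Icc fun y hy => ?_
        rw [← ENNReal.ofReal_add (by unfold lorentzian; positivity)
          (by unfold lorentzian; positivity), ← ENNReal.ofReal_mul (by positivity)]
        exact ENNReal.ofReal_le_ofReal (gNormSq_le_lorentzian_add hN hy)
    _ ≤ ∫⁻ y, ENNReal.ofReal (9 * N) *
          (ENNReal.ofReal (lorentzian N (2 / π) φ y) +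
            ENNReal.ofReal (lorentzian N (2 / π) (φ + 2 * π) y)) :=
        setLIntegral_le_lintegral _ _
    _ = ENNReal.ofReal (9 * N) *
          (ENNReal.ofReal (π / (N * (2 / π))) + ENNReal.ofReal (π / (N * (2 / π)))) := by
        rw [lintegral_const_mul _ (by fun_prop),
          lintegral_add_left (by fun_prop),
          lintegral_lorentzian hN hc, lintegral_lorentzian hN hc]
    _ = ENNReal.ofReal (9 * π ^ 2) := by
        rw [← ENNReal.ofReal_add (by positivity) (by positivity),
          ← ENNReal.ofReal_mul (by positivity)]
        congr 1
        field_simp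
        ring

theorem stmt10 :
    ∫⁻ θ : ℝ × ℝ in Set.Icc (0 : ℝ) (2 * π) ×ˢ Set.Icc (0 : ℝ) (2 * π),
      ENNReal.ofReal
        (‖(1 : ℂ) - Complex.exp (Complex.I * (θ.1 : ℂ))‖ ^ 2 /
          ‖(2 : ℂ) - Complex.exp (Complex.I * (θ.1 : ℂ)) -
            Complex.exp (Complex.I * (θ.2 : ℂ))‖ ^ 2) < ⊤ := by
  change ∫⁻ θ in Set.Icc 0 (2 * π) ×ˢ Set.Icc 0 (2 * π), ENNReal.ofReal (gNormSq θ.1 θ.2) < ⊤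
  rw [Measure.volume_eq_prod, ← Measure.prod_restrict]
  calc _ ≤ ∫⁻ x in Set.Icc 0 (2 * π), ∫⁻ y in Set.Icc 0 (2 * π), ENNReal.ofReal (gNormSq x y) :=
        lintegral_prod_le _
    _ ≤ ∫⁻ _ in Set.Icc 0 (2 * π), ENNReal.ofReal (9 * π ^ 2) :=
        lintegral_mono setLIntegral_gNormSq_le
    _ < ⊤ := by
        rw [setLIntegral_const]
        exact ENNReal.mul_lt_top ENNReal.ofReal_lt_top measure_Icc_lt_top
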